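/- In the discrimination setting, fix δ ∈ (0,1) and define τ₂^aux(p,δ) := (2α̂₂(p,δ) − α̂₁(p,δ))/(α̂₁(p,δ) + α̂₂(p,δ)). Then: τ₂^aux(·,δ) is continuous on [0,1); τ₂^aux(0,δ) = 1/2; τ₂^aux(p,δ) = 2 for all p ∈ [(1−δ)/2, 1); τ₂^aux(·,δ) is strictly increasing on [0, (1−δ)/2); consequently there exists a unique p^aux(δ) ∈ (0, (1−δ)/2) with τ₂^aux(p^aux(δ), δ) = 1, and the equilibrium allocation satisfies τ₂*(p,δ) = τ₂^aux(p,δ) for p ∈ [0, p^aux(δ)] and τ₂*(p,δ) = 1 for p ∈ [p^aux(δ), 1). -/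

import Mathlib

noncomputable section

/-! Discrimination setting (Section 5.2 of the paper): `K = 2`, prior means `0`,
prior variances `Σ⁰₁ = Σ⁰₂ = 1`, budget `T = 1`.  For discrimination level
`δ ∈ (0,1)` the politician's weights are `((1+δ)/2, (1−δ)/2)`; for partiality
level `p ∈ [0,1)` the advisor's weights are `((1−p)/2, (1+p)/2)`.

* `ah1 p δ, ah2 p δ` are the auxiliary weights `α̂₁(p,δ), α̂₂(p,δ)`.
* `tau2aux p δ` is `τ₂^aux(p,δ)` and `tau2star p δ = min{τ₂^aux(p,δ), 1}` is the
  advisor's equilibrium allocation of tests to group 2 (group 1 gets the rest).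
* `omega τ₂ δ` is utilitarian welfare as a function of the allocation, and
  `W p δ = ω(τ₂*(p,δ), δ)` is equilibrium welfare.
* `Dlt τ₂ δ` is the difference of the two groups' ex ante expected utilities and
  `Ineq p δ = |Δ(τ₂*(p,δ), δ)|` is equilibrium inequality. -/

/-- Auxiliary weight `α̂₁(p,δ)`. -/
def ah1 (p δ : ℝ) : ℝ :=
  if p < (1 - δ) / 2 then (1 / 2) * Real.sqrt ((1 + δ) * (1 - 2 * p - δ)) else 0

/-- Auxiliary weight `α̂₂(p,δ)`. -/
def ah2 (p δ : ℝ) : ℝ := (1 / 2) * Real.sqrt ((1 - δ) * (1 + 2 * p + δ))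

/-- `τ₂^aux(p,δ)`. -/
def tau2aux (p δ : ℝ) : ℝ := (2 * ah2 p δ - ah1 p δ) / (ah1 p δ + ah2 p δ)

/-- The advisor's equilibrium allocation of tests to group 2, `τ₂*(p,δ)`. -/
def tau2star (p δ : ℝ) : ℝ := min (tau2aux p δ) 1

/-- Utilitarian welfare `ω(τ₂, δ)` from splitting the budget as `(1−τ₂, τ₂)`. -/
def omega (τ2 δ : ℝ) : ℝ :=
  -3 - δ ^ 2 + ((1 + δ) ^ 2 / 2 + (1 + δ) * (1 - τ2)) / (2 - τ2)
    + ((1 - δ) ^ 2 / 2 + (1 - δ) * τ2) / (1 + τ2)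

/-- Equilibrium welfare `W(p,δ)`. -/
def W (p δ : ℝ) : ℝ := omega (tau2star p δ) δ

/-- Difference `Δ(τ₂,δ)` of the two groups' ex ante expected utilities. -/
def Dlt (τ2 δ : ℝ) : ℝ :=
  (1 + δ) * (1 - τ2) / (2 - τ2) - (1 - δ) * τ2 / (1 + τ2)

/-- Equilibrium inequality `I(p,δ)`. -/
def Ineq (p δ : ℝ) : ℝ := |Dlt (tau2star p δ) δ|

/-! `τ₂^aux = (2α̂₂ − α̂₁)/(α̂₁ + α̂₂)` rises when `α̂₂` grows or `α̂₁` shrinks. As `p` increases,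
`α̂₂` increases while `α̂₁` strictly decreases until it vanishes at `p = (1−δ)/2`, so `τ₂^aux(·,δ)`
is monotone on `[0,∞)`, strictly so up to `(1−δ)/2`, rising from `1/2` (where `α̂₁ = α̂₂`) to `2`.
The intermediate value theorem yields `p^aux`, strict monotonicity makes it unique, and
monotonicity decides on which side of `1` the minimum defining `τ₂*` falls. -/

open Set

lemma two_mul_sub_div_add_le {x x' y y' : ℝ} (hx' : 0 ≤ x') (hx : x' ≤ x) (hy : 0 < y)
    (hy' : y ≤ y') : (2 * y - x) / (x + y) ≤ (2 * y' - x') / (x' + y') := by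
  have key : x' * y ≤ x * y' := mul_le_mul hx hy' hy.le (hx'.trans hx)
  rw [div_le_div_iff₀ (by linarith) (by linarith)]
  nlinarith

lemma two_mul_sub_div_add_lt {x x' y y' : ℝ} (hx' : 0 ≤ x') (hx : x' < x) (hy : 0 < y)
    (hy' : y ≤ y') : (2 * y - x) / (x + y) < (2 * y' - x') / (x' + y') := by
  have key : x' * y < x * y' := mul_lt_mul hx hy' hy (hx'.trans hx.le)
  rw [div_lt_div_iff₀ (by linarith) (by linarith)]
  nlinarith

section DiscriminationSetting

variable {δ : ℝ}

-- On `p ≥ (1−δ)/2` the radicand is `≤ 0`, and `Real.sqrt` sends it to `0`, matching the cut-off.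
lemma ah1_eq_sqrt (hδ : -1 ≤ δ) (p : ℝ) :
    ah1 p δ = 1 / 2 * Real.sqrt ((1 + δ) * (1 - 2 * p - δ)) := by
  unfold ah1
  split_ifs with hp
  · rfl
  · rw [Real.sqrt_eq_zero_of_nonpos (mul_nonpos_of_nonneg_of_nonpos (by linarith) (by linarith)),
      mul_zero]

lemma ah1_nonneg (p : ℝ) : 0 ≤ ah1 p δ := by
  unfold ah1
  split_ifs <;> positivity

lemma ah1_eq_zero {p : ℝ} (hp : (1 - δ) / 2 ≤ p) : ah1 p δ = 0 :=
  if_neg hp.not_gt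

lemma ah1_strictAntiOn (hδ : -1 < δ) : StrictAntiOn (ah1 · δ) (Iic ((1 - δ) / 2)) := by
  rintro p _ q (hq : q ≤ (1 - δ) / 2) hpq
  simp only [ah1_eq_sqrt hδ.le]
  gcongr
  · exact mul_nonneg (by linarith) (by linarith)
  · linarith

lemma ah1_antitone (hδ : -1 ≤ δ) : Antitone (ah1 · δ) := by
  intro p q hpq
  simp only [ah1_eq_sqrt hδ]
  gcongr
  linarith

lemma ah2_monotone (hδ : δ ≤ 1) : Monotone (ah2 · δ) := by
  intro p q hpq
  dsimp only [ah2]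
  gcongr

lemma ah2_pos (hδ : δ ∈ Ioo (-1) 1) {p : ℝ} (hp : 0 ≤ p) : 0 < ah2 p δ := by
  have : 0 < (1 - δ) * (1 + 2 * p + δ) := mul_pos (by linarith [hδ.2]) (by linarith [hδ.1])
  unfold ah2
  positivity

lemma tau2aux_zero (hδ : δ ∈ Ioo (-1) 1) : tau2aux 0 δ = 1 / 2 := by
  have hsymm : ah1 0 δ = ah2 0 δ := by
    rw [ah1_eq_sqrt hδ.1.le, ah2]
    ring_nf
  have := ah2_pos hδ le_rfl
  rw [tau2aux, hsymm]
  field_simp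
  ring

lemma tau2aux_eq_two (hδ : δ ∈ Ioo (-1) 1) {p : ℝ} (hp : (1 - δ) / 2 ≤ p) :
    tau2aux p δ = 2 := by
  have := ah2_pos hδ (p := p) (by linarith [hδ.2])
  rw [tau2aux, ah1_eq_zero hp]
  field_simp
  ring

lemma tau2aux_continuousOn (hδ : δ ∈ Ioo (-1) 1) : ContinuousOn (tau2aux · δ) (Ici 0) := by
  have hah1 : Continuous (ah1 · δ) := by
    simp only [ah1_eq_sqrt hδ.1.le]
    fun_prop
  have hah2 : Continuous (ah2 · δ) := by
    unfold ah2
    fun_prop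
  refine ContinuousOn.div (by fun_prop) (by fun_prop) fun p hp => ?_
  exact (add_pos_of_nonneg_of_pos (ah1_nonneg p) (ah2_pos hδ hp)).ne'

lemma tau2aux_monotoneOn (hδ : δ ∈ Ioo (-1) 1) : MonotoneOn (tau2aux · δ) (Ici 0) :=
  fun _ hp _ _ hpq => two_mul_sub_div_add_le (ah1_nonneg _) (ah1_antitone hδ.1.le hpq)
    (ah2_pos hδ hp) (ah2_monotone hδ.2.le hpq)

lemma tau2aux_strictMonoOn (hδ : δ ∈ Ioo (-1) 1) :
    StrictMonoOn (tau2aux · δ) (Icc 0 ((1 - δ) / 2)) :=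
  fun _ hp _ hq hpq => two_mul_sub_div_add_lt (ah1_nonneg _)
    (ah1_strictAntiOn hδ.1 hp.2 hq.2 hpq) (ah2_pos hδ hp.1) (ah2_monotone hδ.2.le hpq.le)

end DiscriminationSetting

/-- Lemma 5 of the paper (properties of `τ₂^aux` and the threshold
partiality level `p^aux(δ)`). -/
theorem stmt_11 (δ : ℝ) (hδ : δ ∈ Set.Ioo (0 : ℝ) 1) :
    ContinuousOn (fun p => tau2aux p δ) (Set.Ico (0 : ℝ) 1) ∧
    tau2aux 0 δ = 1 / 2 ∧
    (∀ p ∈ Set.Ico ((1 - δ) / 2) (1 : ℝ), tau2aux p δ = 2) ∧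
    StrictMonoOn (fun p => tau2aux p δ) (Set.Ico (0 : ℝ) ((1 - δ) / 2)) ∧
    ∃ paux ∈ Set.Ioo (0 : ℝ) ((1 - δ) / 2),
      tau2aux paux δ = 1 ∧
      (∀ q ∈ Set.Ioo (0 : ℝ) ((1 - δ) / 2), tau2aux q δ = 1 → q = paux) ∧
      (∀ p ∈ Set.Icc (0 : ℝ) paux, tau2star p δ = tau2aux p δ) ∧
      (∀ p ∈ Set.Ico paux (1 : ℝ), tau2star p δ = 1) := by
  have hδ' : δ ∈ Ioo (-1) 1 := ⟨by linarith [hδ.1], hδ.2⟩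
  have hb : (0 : ℝ) < (1 - δ) / 2 := by linarith [hδ.2]
  have hmono := tau2aux_monotoneOn hδ'
  have hstrict := tau2aux_strictMonoOn hδ'
  have hcont := tau2aux_continuousOn hδ'
  have hone : (1 : ℝ) ∈ Ioo (tau2aux 0 δ) (tau2aux ((1 - δ) / 2) δ) := by
    rw [tau2aux_zero hδ', tau2aux_eq_two hδ' le_rfl]
    norm_num
  obtain ⟨paux, hpaux, hval⟩ :=
    intermediate_value_Ioo hb.le (hcont.mono Icc_subset_Ici_self) hone
  refine ⟨hcont.mono Ico_subset_Ici_self, tau2aux_zero hδ', fun p hp => tau2aux_eq_two hδ' hp.1,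
    hstrict.mono Ico_subset_Icc_self, paux, hpaux, hval, ?_, ?_, ?_⟩
  · exact fun q hq hq1 =>
      hstrict.injOn (Ioo_subset_Icc_self hq) (Ioo_subset_Icc_self hpaux) (hq1.trans hval.symm)
  · exact fun p hp => min_eq_left (hval ▸ hmono hp.1 hpaux.1.le hp.2)
  · exact fun p hp => min_eq_right (hval ▸ hmono hpaux.1.le (hpaux.1.le.trans hp.1) hp.1)
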